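/- In the quotient ring ℤ[x_1,x_2,x_3]/I_3 where I_3 = (e_1, e_2, e_3) is generated by the elementary symmetric polynomials, the images of the six Schubert polynomials 1, x_1, x_1+x_2, x_1², x_1x_2, x_1²x_2 form a ℤ-basis. -/

import Mathlib

open MvPolynomial

/-- The ideal `I_3 ⊂ ℤ[x_1,x_2,x_3]` generated by the elementary symmetric polynomials. -/
noncomputable def I3 : Ideal (MvPolynomial (Fin 3) ℤ) :=
  Ideal.span {esymm (Fin 3) ℤ 1, esymm (Fin 3) ℤ 2, esymm (Fin 3) ℤ 3}

/-- The six Schubert polynomials for `S_3`: `1, x_1, x_1+x_2, x_1², x_1x_2, x_1²x_2`. -/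
noncomputable def schubert3 : Fin 6 → MvPolynomial (Fin 3) ℤ :=
  ![1, X 0, X 0 + X 1, X 0 ^ 2, X 0 * X 1, X 0 ^ 2 * X 1]

/-!
Modulo `I_3` the variables are the three roots of `T³`: `x₃ = -x₁ - x₂`, `x₁³ = 0` and
`x₂² + x₁x₂ + x₁² = 0`. With these relations the ℤ-span of the Schubert classes contains `1` and
is stable under multiplication by every `xᵢ`, so it is everything.

For independence we map the quotient to the splitting algebra of `T³` built by adjoining roots
one at a time: first `u`, a root of `T³`, then `v`, a root of `(T³ - u³)/(T - u) = T² + uT + u²`.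
It is free over `ℤ` on `uⁱvʲ` (`i < 3`, `j < 2`), and the images `1, u, u + v, u², uv, u²v` of
the Schubert polynomials are unitriangular in that basis.
-/

open scoped Polynomial

theorem Submodule.span_range_eq_top_of_mul_mem {R A ι : Type*} [CommSemiring R] [Semiring A]
    [Algebra R A] {s : Set A} (hs : Algebra.adjoin R s = ⊤) {v : ι → A}
    (h1 : 1 ∈ span R (Set.range v)) (hv : ∀ x ∈ s, ∀ i, x * v i ∈ span R (Set.range v)) :
    span R (Set.range v) = ⊤ := by
  set M := span R (Set.range v)
  have hmul : ∀ a : A, ∀ m ∈ M, a * m ∈ M := by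
    intro a
    have ha : a ∈ Algebra.adjoin R s := hs ▸ Algebra.mem_top
    induction ha using Algebra.adjoin_induction with
    | mem x hx =>
      have : M ≤ M.comap (LinearMap.mulLeft R x) :=
        span_le.mpr (by rintro _ ⟨i, rfl⟩; exact hv x hx i)
      exact fun m hm => this hm
    | algebraMap r => intro m hm; simpa [Algebra.algebraMap_eq_smul_one] using M.smul_mem r hm
    | add x y _ _ hx hy => intro m hm; simpa [add_mul] using M.add_mem (hx m hm) (hy m hm)
    | mul x y _ _ hx hy => intro m hm; simpa [mul_assoc] using hx _ (hy m hm)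
  exact eq_top_iff'.mpr fun a => by simpa using hmul a 1 h1

theorem Ideal.Quotient.adjoin_range_mk_X {σ R : Type*} [CommRing R]
    (I : Ideal (MvPolynomial σ R)) :
    Algebra.adjoin R (Set.range fun i => Ideal.Quotient.mk I (X i)) = ⊤ := by
  have : (Set.range fun i => Ideal.Quotient.mk I (X i)) =
      Ideal.Quotient.mkₐ R I '' Set.range X := by
    rw [← Set.range_comp]; rfl
  rw [this, Algebra.adjoin_image, adjoin_range_X, Algebra.map_top, AlgHom.range_eq_top]
  exact Ideal.Quotient.mkₐ_surjective R I

namespace AdjoinRoot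

variable {R : Type*} [CommRing R] {f : R[X]}

theorem eq_zero_of_mk_eq_zero_of_degree_lt (hf : f.Monic) {g : R[X]} (hg : g.degree < f.degree)
    (h : mk f g = 0) : g = 0 :=
  not_not.mp fun h0 => mk_ne_zero_of_degree_lt hf h0 hg h

theorem eq_zero_of_of_add_of_mul_root_eq_zero (hf : f.Monic) (hdeg : 2 ≤ f.natDegree) {a b : R}
    (h : of f a + of f b * root f = 0) : a = 0 ∧ b = 0 := by
  have hg : (Polynomial.C a + Polynomial.C b * Polynomial.X).degree < f.degree := by
    refine Polynomial.degree_lt_degree (lt_of_le_of_lt (b := 1) (by compute_degree) ?_)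
    omega
  have hg0 := eq_zero_of_mk_eq_zero_of_degree_lt hf hg (by simpa using h)
  exact ⟨by simpa using congrArg (Polynomial.coeff · 0) hg0,
    by simpa using congrArg (Polynomial.coeff · 1) hg0⟩

theorem eq_zero_of_of_add_of_mul_root_add_of_mul_root_sq_eq_zero (hf : f.Monic)
    (hdeg : 3 ≤ f.natDegree) {a b c : R}
    (h : of f a + of f b * root f + of f c * root f ^ 2 = 0) : a = 0 ∧ b = 0 ∧ c = 0 := by
  have hg : (Polynomial.C a + Polynomial.C b * Polynomial.X +
      Polynomial.C c * Polynomial.X ^ 2).degree < f.degree := by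
    refine Polynomial.degree_lt_degree (lt_of_le_of_lt (b := 2) (by compute_degree) ?_)
    omega
  have hg0 := eq_zero_of_mk_eq_zero_of_degree_lt hf hg (by simpa using h)
  exact ⟨by simpa using congrArg (Polynomial.coeff · 0) hg0,
    by simpa [Polynomial.coeff_X] using congrArg (Polynomial.coeff · 1) hg0,
    by simpa [Polynomial.coeff_X] using congrArg (Polynomial.coeff · 2) hg0⟩

end AdjoinRoot

section Fin3

variable {R : Type*} [CommRing R]

theorem esymm_fin_three_one : esymm (Fin 3) R 1 = X 0 + X 1 + X 2 := by
  simp [esymm_one, Fin.sum_univ_three]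

theorem esymm_fin_three_two : esymm (Fin 3) R 2 = X 0 * X 1 + X 0 * X 2 + X 1 * X 2 := by
  rw [esymm, show Finset.powersetCard 2 (Finset.univ : Finset (Fin 3)) = {{0, 1}, {0, 2}, {1, 2}}
    by decide]
  simp +decide [add_assoc]

theorem esymm_fin_three_three : esymm (Fin 3) R 3 = X 0 * X 1 * X 2 := by
  rw [esymm, show Finset.powersetCard 3 (Finset.univ : Finset (Fin 3)) = {{0, 1, 2}} by decide]
  simp +decide [mul_assoc]

end Fin3

noncomputable abbrev NilCube : Type := AdjoinRoot (Polynomial.X ^ 3 : ℤ[X])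

instance : Nontrivial NilCube := AdjoinRoot.nontrivial _ (by simp)

noncomputable def secondRootPoly : NilCube[X] :=
  Polynomial.X ^ 2 + Polynomial.C (AdjoinRoot.root _) * Polynomial.X +
    Polynomial.C (AdjoinRoot.root _) ^ 2

theorem secondRootPoly_monic : secondRootPoly.Monic := by
  unfold secondRootPoly; monicity!

theorem secondRootPoly_natDegree : secondRootPoly.natDegree = 2 := by
  unfold secondRootPoly; compute_degree!

noncomputable abbrev SplittingAlgebra : Type := AdjoinRoot secondRootPoly

namespace SplittingAlgebra

noncomputable def u : SplittingAlgebra := AdjoinRoot.of _ (AdjoinRoot.root _)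

noncomputable def v : SplittingAlgebra := AdjoinRoot.root _

theorem u_pow_three : u ^ 3 = 0 := by
  rw [u, ← map_pow, ← AdjoinRoot.mk_X, ← map_pow, AdjoinRoot.mk_self, map_zero]

theorem v_sq_add : v ^ 2 + u * v + u ^ 2 = 0 := by
  have h : AdjoinRoot.mk secondRootPoly (Polynomial.X ^ 2 +
      Polynomial.C (AdjoinRoot.root _) * Polynomial.X + Polynomial.C (AdjoinRoot.root _) ^ 2) = 0 :=
    AdjoinRoot.mk_self
  simpa [u, v, AdjoinRoot.mk_X, AdjoinRoot.mk_C] using h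

noncomputable def eval : MvPolynomial (Fin 3) ℤ →ₐ[ℤ] SplittingAlgebra :=
  aeval ![u, v, -u - v]

theorem eval_eq_zero_of_mem_I3 {p : MvPolynomial (Fin 3) ℤ} (hp : p ∈ I3) : eval p = 0 := by
  suffices I3 ≤ RingHom.ker eval from this hp
  refine Ideal.span_le.mpr ?_
  rintro _ (rfl | rfl | rfl) <;>
    simp only [SetLike.mem_coe, RingHom.mem_ker, esymm_fin_three_one, esymm_fin_three_two,
      esymm_fin_three_three, map_add, map_mul, eval, aeval_X, Fin.isValue, Matrix.cons_val_zero,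
      Matrix.cons_val_one, Matrix.cons_val]
  · ring
  · linear_combination -v_sq_add
  · linear_combination -u * v_sq_add + u_pow_three

theorem linearIndependent_eval_schubert3 : LinearIndependent ℤ fun i => eval (schubert3 i) := by
  rw [Fintype.linearIndependent_iff]
  intro c hc
  set r := AdjoinRoot.root (Polynomial.X ^ 3 : ℤ[X])
  set ofInt := AdjoinRoot.of (Polynomial.X ^ 3 : ℤ[X])
  have hcoord : AdjoinRoot.of secondRootPoly
        (ofInt (c 0) + ofInt (c 1 + c 2) * r + ofInt (c 3) * r ^ 2) +
      AdjoinRoot.of secondRootPoly (ofInt (c 2) + ofInt (c 4) * r + ofInt (c 5) * r ^ 2) * v = 0 := by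
    rw [← hc]
    simp only [Fin.sum_univ_six, schubert3, eval, u, v, ofInt, r, Fin.isValue, Matrix.cons_val_zero,
      Matrix.cons_val_one, Matrix.cons_val, map_one, map_add, map_mul, map_pow, eq_intCast,
      map_intCast, aeval_X, zsmul_eq_mul, mul_one]
    ring
  obtain ⟨hp, hq⟩ := AdjoinRoot.eq_zero_of_of_add_of_mul_root_eq_zero secondRootPoly_monic
    secondRootPoly_natDegree.ge hcoord
  obtain ⟨h0, h12, h3⟩ := AdjoinRoot.eq_zero_of_of_add_of_mul_root_add_of_mul_root_sq_eq_zero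
    (Polynomial.monic_X_pow 3) (by simp) hp
  obtain ⟨h2, h4, h5⟩ := AdjoinRoot.eq_zero_of_of_add_of_mul_root_add_of_mul_root_sq_eq_zero
    (Polynomial.monic_X_pow 3) (by simp) hq
  intro i
  fin_cases i <;> simp <;> omega

end SplittingAlgebra

section Quotient

local notation "x̄" i:max => Ideal.Quotient.mk I3 (X i)

local notation "𝒮" => Submodule.span ℤ (Set.range fun k => Ideal.Quotient.mk I3 (schubert3 k))

theorem mk_esymm_eq_zero {k : ℕ} (hk : k = 1 ∨ k = 2 ∨ k = 3) :
    Ideal.Quotient.mk I3 (esymm (Fin 3) ℤ k) = 0 :=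
  Ideal.Quotient.eq_zero_iff_mem.mpr <| Ideal.subset_span <| by
    rcases hk with rfl | rfl | rfl <;> simp

theorem mk_X_two : x̄ 2 = -x̄ 0 - x̄ 1 := by
  have h1 := mk_esymm_eq_zero (k := 1) (by simp)
  rw [esymm_fin_three_one, map_add, map_add] at h1
  linear_combination h1

theorem mk_X_one_sq_add : x̄ 1 ^ 2 + x̄ 0 * x̄ 1 + x̄ 0 ^ 2 = 0 := by
  have h2 := mk_esymm_eq_zero (k := 2) (by simp)
  rw [esymm_fin_three_two, map_add, map_add, map_mul, map_mul, map_mul, mk_X_two] at h2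
  linear_combination -h2

theorem mk_X_zero_pow_three : x̄ 0 ^ 3 = 0 := by
  have h3 := mk_esymm_eq_zero (k := 3) (by simp)
  rw [esymm_fin_three_three, map_mul, map_mul, mk_X_two] at h3
  linear_combination x̄ 0 * mk_X_one_sq_add + h3

theorem schubert_classes_mem_span :
    1 ∈ 𝒮 ∧ x̄ 0 ∈ 𝒮 ∧ x̄ 0 + x̄ 1 ∈ 𝒮 ∧ x̄ 0 ^ 2 ∈ 𝒮 ∧ x̄ 0 * x̄ 1 ∈ 𝒮 ∧ x̄ 0 ^ 2 * x̄ 1 ∈ 𝒮 := by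
  refine ⟨Submodule.subset_span ⟨0, ?_⟩, Submodule.subset_span ⟨1, ?_⟩,
    Submodule.subset_span ⟨2, ?_⟩, Submodule.subset_span ⟨3, ?_⟩, Submodule.subset_span ⟨4, ?_⟩,
    Submodule.subset_span ⟨5, ?_⟩⟩ <;> simp [schubert3]

theorem mk_X_zero_mul_mem_span (j : Fin 6) : x̄ 0 * Ideal.Quotient.mk I3 (schubert3 j) ∈ 𝒮 := by
  obtain ⟨-, h1, -, h3, h4, h5⟩ := schubert_classes_mem_span
  generalize 𝒮 = S at h1 h3 h4 h5 ⊢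
  fin_cases j <;>
    simp only [schubert3, Fin.isValue, Fin.zero_eta, Fin.mk_one, Fin.reduceFinMk,
      Matrix.cons_val_zero, Matrix.cons_val_one, Matrix.cons_val, map_one, map_add, map_mul,
      map_pow]
  · simpa using h1
  · simpa [sq] using h3
  · simpa [mul_add, sq] using add_mem h3 h4
  · convert zero_mem S; linear_combination mk_X_zero_pow_three
  · convert h5 using 1; ring
  · convert zero_mem S; linear_combination x̄ 1 * mk_X_zero_pow_three

theorem mk_X_one_mul_mem_span (j : Fin 6) : x̄ 1 * Ideal.Quotient.mk I3 (schubert3 j) ∈ 𝒮 := by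
  obtain ⟨-, h1, h2, h3, h4, h5⟩ := schubert_classes_mem_span
  generalize 𝒮 = S at h1 h2 h3 h4 h5 ⊢
  fin_cases j <;>
    simp only [schubert3, Fin.isValue, Fin.zero_eta, Fin.mk_one, Fin.reduceFinMk,
      Matrix.cons_val_zero, Matrix.cons_val_one, Matrix.cons_val, map_one, map_add, map_mul,
      map_pow]
  · simpa using sub_mem h2 h1
  · convert h4 using 1; ring
  · convert neg_mem h3 using 1; linear_combination mk_X_one_sq_add
  · convert h5 using 1; ring
  · convert neg_mem h5 using 1; linear_combination x̄ 0 * mk_X_one_sq_add - mk_X_zero_pow_three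
  · convert zero_mem S
    linear_combination x̄ 0 ^ 2 * mk_X_one_sq_add - (x̄ 0 + x̄ 1) * mk_X_zero_pow_three

theorem mk_X_mul_mem_span (i : Fin 3) (j : Fin 6) :
    x̄ i * Ideal.Quotient.mk I3 (schubert3 j) ∈ 𝒮 := by
  match i with
  | 0 => exact mk_X_zero_mul_mem_span j
  | 1 => exact mk_X_one_mul_mem_span j
  | 2 =>
    convert sub_mem (neg_mem (mk_X_zero_mul_mem_span j)) (mk_X_one_mul_mem_span j) using 1
    rw [mk_X_two]; ring

end Quotient

/-- The images of the six Schubert polynomials in `ℤ[x_1,x_2,x_3]/I_3` form a `ℤ`-basis: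
they are linearly independent and span the quotient. -/
theorem schubert_basis_S3 :
    LinearIndependent ℤ (fun i => Ideal.Quotient.mk I3 (schubert3 i)) ∧
    Submodule.span ℤ (Set.range fun i => Ideal.Quotient.mk I3 (schubert3 i)) = ⊤ := by
  refine ⟨?_, ?_⟩
  · exact LinearIndependent.of_comp
      (Ideal.Quotient.liftₐ I3 SplittingAlgebra.eval
        fun _ => SplittingAlgebra.eval_eq_zero_of_mem_I3).toLinearMap
      SplittingAlgebra.linearIndependent_eval_schubert3
  · refine Submodule.span_range_eq_top_of_mul_mem (Ideal.Quotient.adjoin_range_mk_X I3)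
      schubert_classes_mem_span.1 ?_
    rintro _ ⟨i, rfl⟩ j
    exact mk_X_mul_mem_span i j
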